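/- Let N_α = det_{1≤i,j≤n}(x_i^{α_j} + x_i^{-α_j}) for α = (α_1,...,α_n) ∈ ℕ^n, and let p̄_r = Σ_{i=1}^n (x_i^r + x_i^{-r}). Then p̄_r · N_α = Σ_{j=1}^n N_{α + r·ε_j} + Σ_{j=1}^n N_{α - r·ε_j}. -/

import Mathlib

/-! Writing `c_i = x_i^r + x_i^{-r}`, scaling column `j` of a matrix entrywise by `c`
multiplies the Leibniz term of `σ` by `c_{σ j}`; summing over `j` therefore gives
`(∑ c_i) · det M`. On the other hand `c_i (x_i^a + x_i^{-a})` is the sum of the entries for the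
exponents `a + r` and `a - r`, so by additivity in column `j` each scaled determinant splits as
`N_{α + r ε_j} + N_{α - r ε_j}`. -/

open scoped BigOperators

noncomputable section

/-- The field of rational functions in `n` variables over `ℚ`; the variables
`x_i` are invertible there, so Laurent expressions make sense. -/
abbrev K (n : ℕ) := FractionRing (MvPolynomial (Fin n) ℚ)

/-- The variables `x_i`. -/
def X {n : ℕ} (i : Fin n) : K n :=
  algebraMap (MvPolynomial (Fin n) ℚ) (K n) (MvPolynomial.X i)

/-- `N_α = det(x_i^{α_j} + x_i^{-α_j})`. -/
def N (n : ℕ) (α : Fin n → ℤ) : K n :=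
  Matrix.det (Matrix.of fun i j : Fin n => X i ^ (α j) + X i ^ (-(α j)))

namespace Matrix

variable {ι R : Type*} [Fintype ι] [DecidableEq ι] [CommRing R]

theorem sum_det_updateCol_mul (M : Matrix ι ι R) (c : ι → R) :
    ∑ j, (M.updateCol j fun i => c i * M i j).det = (∑ i, c i) * M.det := by
  have leibniz_term (j : ι) (σ : Equiv.Perm ι) :
      ∏ i, (M.updateCol j fun i => c i * M i j) (σ i) i = c (σ j) * ∏ i, M (σ i) i := by
    calc ∏ i, (M.updateCol j fun i => c i * M i j) (σ i) i
        = ∏ i, (if i = j then c (σ i) else 1) * M (σ i) i :=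
          Finset.prod_congr rfl fun i _ => by
            by_cases h : i = j <;> simp [h]
      _ = c (σ j) * ∏ i, M (σ i) i := by
          rw [Finset.prod_mul_distrib, Finset.prod_ite_eq' Finset.univ j,
            if_pos (Finset.mem_univ j)]
  simp only [det_apply, leibniz_term, Finset.mul_sum]
  rw [Finset.sum_comm]
  refine Finset.sum_congr rfl fun σ _ => ?_
  rw [← Finset.smul_sum, ← Finset.sum_mul, Equiv.sum_comp σ c, mul_smul_comm]

end Matrix

theorem zpow_add_zpow_neg_mul {F : Type*} [Field F] {x : F} (hx : x ≠ 0) (a r : ℤ) :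
    (x ^ r + x ^ (-r)) * (x ^ a + x ^ (-a)) =
      (x ^ (a + r) + x ^ (-(a + r))) + (x ^ (a - r) + x ^ (-(a - r))) := by
  simp only [neg_add, sub_eq_add_neg, zpow_add₀ hx, zpow_neg]
  field_simp
  ring

section ZpowSymm

variable {ι F : Type*} [DecidableEq ι] [Field F]

def zpowSymmMatrix (x : ι → F) (β : ι → ℤ) : Matrix ι ι F :=
  Matrix.of fun i j => x i ^ β j + x i ^ (-β j)

theorem updateCol_zpowSymmMatrix (x : ι → F) (β : ι → ℤ) (j : ι) (v : ℤ) :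
    (zpowSymmMatrix x β).updateCol j (fun i => x i ^ v + x i ^ (-v)) =
      zpowSymmMatrix x (Function.update β j v) := by
  ext i k
  by_cases h : k = j <;> simp [zpowSymmMatrix, h]

theorem sum_zpow_add_zpow_neg_mul_det_zpowSymmMatrix [Fintype ι] {x : ι → F}
    (hx : ∀ i, x i ≠ 0) (β : ι → ℤ) (r : ℤ) :
    (∑ i, (x i ^ r + x i ^ (-r))) * (zpowSymmMatrix x β).det =
      ∑ j, (zpowSymmMatrix x (Function.update β j (β j + r))).det +
        ∑ j, (zpowSymmMatrix x (Function.update β j (β j - r))).det := by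
  rw [← Matrix.sum_det_updateCol_mul, ← Finset.sum_add_distrib]
  refine Finset.sum_congr rfl fun j _ => ?_
  have split_column : (fun i => (x i ^ r + x i ^ (-r)) * zpowSymmMatrix x β i j) =
      (fun i => x i ^ (β j + r) + x i ^ (-(β j + r))) +
        fun i => x i ^ (β j - r) + x i ^ (-(β j - r)) :=
    funext fun i => zpow_add_zpow_neg_mul (hx i) (β j) r
  rw [split_column, Matrix.det_updateCol_add, updateCol_zpowSymmMatrix, updateCol_zpowSymmMatrix]

end ZpowSymm

theorem X_ne_zero {n : ℕ} (i : Fin n) : X i ≠ 0 := by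
  simp [X, MvPolynomial.X_ne_zero]

theorem pbar_mul_N_general (n : ℕ) (α : Fin n → ℕ) (r : ℤ) :
    (∑ i : Fin n, (X i ^ r + X i ^ (-r))) * N n (fun j => (α j : ℤ)) =
      (∑ j : Fin n, N n (Function.update (fun k => (α k : ℤ)) j ((α j : ℤ) + r))) +
        ∑ j : Fin n, N n (Function.update (fun k => (α k : ℤ)) j ((α j : ℤ) - r)) :=
  sum_zpow_add_zpow_neg_mul_det_zpowSymmMatrix X_ne_zero _ r

/-- `p̄_r N_α = Σ_j N_{α + r ε_j} + Σ_j N_{α - r ε_j}`. -/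
theorem pbar_mul_N (n : ℕ) (α : Fin n → ℕ) (r : ℤ) (hr : 1 ≤ r) :
    (∑ i : Fin n, (X i ^ r + X i ^ (-r))) * N n (fun j => (α j : ℤ)) =
      (∑ j : Fin n, N n (Function.update (fun k => (α k : ℤ)) j ((α j : ℤ) + r))) +
        ∑ j : Fin n, N n (Function.update (fun k => (α k : ℤ)) j ((α j : ℤ) - r)) :=
  pbar_mul_N_general n α r
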